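/- Let F : ℝⁿ → ℝⁿ be twice continuously differentiable and define the quotient gradient system vector field Q(x) = -DF(x)ᵀF(x), where DF(x) is the (Fréchet) derivative of F at x and DF(x)ᵀ its adjoint. If x̂ satisfies F(x̂) = 0 and DF(x̂) is invertible, then the linearization of Q at x̂ is negative definite: for every nonzero vector y, ⟨(DQ(x̂))y, y⟩ < 0 (so x̂ is a stable equilibrium point of ẋ = Q(x)). -/

import Mathlib

open scoped RealInnerProductSpace

/-
At a zero `x̂` of `F` the term `D(DF(·)ᵀ)(x̂)[y] F(x̂)` of the product rule vanishes, so
`DQ(x̂) = -DF(x̂)ᵀ DF(x̂)` and `⟪DQ(x̂) y, y⟫ = -‖DF(x̂) y‖²`, which is negative for `y ≠ 0`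
because `DF(x̂)` is injective.
-/

open ContinuousLinearMap

theorem HasFDerivAt.clm_apply_of_eq_zero {𝕜 E F G : Type*} [NontriviallyNormedField 𝕜]
    [NormedAddCommGroup E] [NormedSpace 𝕜 E] [NormedAddCommGroup F] [NormedSpace 𝕜 F]
    [NormedAddCommGroup G] [NormedSpace 𝕜 G] {c : E → F →L[𝕜] G} {u : E → F}
    {u' : E →L[𝕜] F} {x : E} (hc : DifferentiableAt 𝕜 c x) (hu : HasFDerivAt u u' x)
    (hux : u x = 0) :
    HasFDerivAt (fun y => c y (u y)) ((c x).comp u') x := by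
  simpa [hux] using hc.hasFDerivAt.clm_apply hu

section RealInnerProductSpace

variable {E : Type*} [NormedAddCommGroup E] [InnerProductSpace ℝ E] [CompleteSpace E]

theorem ContDiffAt.differentiableAt_adjoint_fderiv {F : E → E} {x : E} (hF : ContDiffAt ℝ 2 F x) :
    DifferentiableAt ℝ (fun y => adjoint (fderiv ℝ F y)) x := by
  simp only [← star_eq_adjoint]
  exact ((hF.fderiv_right (m := 1) (by norm_num)).differentiableAt one_ne_zero).star

theorem hasFDerivAt_adjoint_fderiv_apply_of_eq_zero {F : E → E} {x : E}
    (hF : ContDiffAt ℝ 2 F x) (hx : F x = 0) :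
    HasFDerivAt (fun y => adjoint (fderiv ℝ F y) (F y))
      (adjoint (fderiv ℝ F x) ∘L fderiv ℝ F x) x :=
  HasFDerivAt.clm_apply_of_eq_zero hF.differentiableAt_adjoint_fderiv
    (hF.differentiableAt two_ne_zero).hasFDerivAt hx

theorem ContinuousLinearMap.inner_adjoint_comp_self_apply_pos {G : Type*} [NormedAddCommGroup G]
    [InnerProductSpace ℝ G] [CompleteSpace G] (A : E →L[ℝ] G) {y : E} (hy : A y ≠ 0) :
    0 < ⟪(adjoint A ∘L A) y, y⟫ := by
  rw [← RCLike.re_to_real (x := ⟪_, _⟫), ← apply_norm_sq_eq_inner_adjoint_left]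
  exact pow_pos (norm_pos_iff.mpr hy) 2

end RealInnerProductSpace

/-- Proposition 1: at a zero of `F` where `DF` is invertible, the linearization of the
quotient gradient system `Q(x) = -DF(x)ᵀ F(x)` is negative definite. -/
theorem qgs_linearization_negative_definite (n : ℕ)
    (F Q : EuclideanSpace ℝ (Fin n) → EuclideanSpace ℝ (Fin n))
    (hF : ContDiff ℝ 2 F)
    (hQ : ∀ x, Q x = -(ContinuousLinearMap.adjoint (fderiv ℝ F x)) (F x))
    (xhat : EuclideanSpace ℝ (Fin n))
    (hzero : F xhat = 0)
    (hinv : IsUnit (fderiv ℝ F xhat)) :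
    ∀ y : EuclideanSpace ℝ (Fin n), y ≠ 0 → ⟪fderiv ℝ Q xhat y, y⟫ < 0 := by
  intro y hy
  set A := fderiv ℝ F xhat
  have hDQ : fderiv ℝ Q xhat = -(adjoint A ∘L A) := by
    rw [show Q = fun x => -adjoint (fderiv ℝ F x) (F x) from funext hQ]
    exact (hasFDerivAt_adjoint_fderiv_apply_of_eq_zero hF.contDiffAt hzero).neg.fderiv
  have hAy : A y ≠ 0 := fun h =>
    hy ((isUnit_iff_bijective.mp hinv).injective (h.trans (map_zero A).symm))
  rw [hDQ, neg_apply, inner_neg_left, neg_lt_zero]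
  exact A.inner_adjoint_comp_self_apply_pos hAy
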